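/- Let G = C_2 × C_2 be the Klein four-group with generators x and y. Then 𝔹_G is cyclic of order 2, generated by the element [x, y, xy]. -/

import Mathlib

namespace SingOrbit

variable (G : Type*) [Group G]

/-- The map from conjugacy classes to the abelianization. -/
def classAb : ConjClasses G → Additive (Abelianization G) :=
  Quotient.lift (fun g : G => Additive.ofMul (Abelianization.of g)) <| by
    intro a b hab
    obtain ⟨c, hc⟩ := isConj_iff.mp (hab : IsConj a b)
    subst hc
    show Additive.ofMul (Abelianization.of a) = Additive.ofMul (Abelianization.of (c * a * c⁻¹))
    congr 1
    rw [map_mul, map_mul, map_inv, mul_comm (Abelianization.of c) (Abelianization.of a),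
      mul_inv_cancel_right]

/-- Nontrivial conjugacy classes. -/
def NCC := {c : ConjClasses G // c ≠ 1}

/-- The homomorphism `φ` from the free abelian group on the nontrivial conjugacy classes
to the abelianization, sending a conjugacy class to the image of any representative. -/
noncomputable def phi : FreeAbelianGroup (NCC G) →+ Additive (Abelianization G) :=
  FreeAbelianGroup.lift fun c => classAb G c.1

/-- The basis element of the free abelian group corresponding to a conjugacy class
(`0` for the trivial class). -/
noncomputable def clsC (c : ConjClasses G) : FreeAbelianGroup (NCC G) :=
  letI := Classical.dec (c = 1)
  if h : c = 1 then 0 else FreeAbelianGroup.of ⟨c, h⟩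

/-- The basis element corresponding to the conjugacy class of a group element. -/
noncomputable def clsF (x : G) : FreeAbelianGroup (NCC G) := clsC G (ConjClasses.mk x)

/-- The subgroup generated by the elements `x̂ + x̂⁻¹`. -/
noncomputable def NSub : AddSubgroup (FreeAbelianGroup (NCC G)) :=
  AddSubgroup.closure {a | ∃ x : G, a = clsF G x + clsF G x⁻¹}

/-- The group `𝔹_G` of singular orbit data: `(ker φ) / N`. -/
noncomputable def SOD := (phi G).ker ⧸ ((NSub G).addSubgroupOf (phi G).ker)

noncomputable instance : AddCommGroup (SOD G) :=
  inferInstanceAs (AddCommGroup ((phi G).ker ⧸ ((NSub G).addSubgroupOf (phi G).ker)))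

variable {G}

lemma classAb_mk (x : G) :
    classAb G (ConjClasses.mk x) = Additive.ofMul (Abelianization.of x) := rfl

lemma mk_eq_one_iff {x : G} : ConjClasses.mk x = 1 ↔ x = 1 := by
  rw [ConjClasses.one_eq_mk_one, ConjClasses.mk_eq_mk_iff_isConj, isConj_one_left]

lemma phi_of (c : NCC G) : phi G (FreeAbelianGroup.of c) = classAb G c.1 :=
  FreeAbelianGroup.lift_apply_of _ _

lemma phi_clsF (x : G) : phi G (clsF G x) = Additive.ofMul (Abelianization.of x) := by
  rw [clsF, clsC]
  split_ifs with h
  · have hx : x = 1 := mk_eq_one_iff.mp h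
    subst hx
    simp
  · exact phi_of (G := G) ⟨_, h⟩

/-- The element of the free abelian group associated to a list of group elements. -/
noncomputable def sumF (l : List G) : FreeAbelianGroup (NCC G) := (l.map (clsF G)).sum

lemma sumF_nil : sumF ([] : List G) = 0 := rfl

lemma sumF_cons (a : G) (t : List G) : sumF (a :: t) = clsF G a + sumF t := by
  simp [sumF]

lemma phi_sumF (l : List G) :
    phi G (sumF l) = Additive.ofMul (Abelianization.of l.prod) := by
  induction l with
  | nil => simp [sumF_nil]
  | cons a t ih =>
    rw [sumF_cons, map_add, phi_clsF, ih, List.prod_cons, map_mul, ofMul_mul]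

lemma abOf_eq_one_iff {x : G} : Abelianization.of x = 1 ↔ x ∈ commutator G :=
  QuotientGroup.eq_one_iff x

lemma sumF_mem_ker {l : List G} (h : l.prod ∈ commutator G) : sumF l ∈ (phi G).ker := by
  rw [AddMonoidHom.mem_ker, phi_sumF, abOf_eq_one_iff.mpr h]
  rfl

/-- The singular orbit datum `[x̂₁, …, x̂_q]` associated to a list of group elements whose
product lies in the commutator subgroup. -/
noncomputable def data (l : List G) (h : l.prod ∈ commutator G) : SOD G :=
  (QuotientAddGroup.mk ⟨sumF l, sumF_mem_ker h⟩ : SOD G)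

/-
Every element of the Klein four-group `K` is an involution, so `x̂ + x̂⁻¹ = 2x̂` and `2F ⊆ N`;
in particular `𝔹_K` is killed by `2`. For any group, counting entries mod 2 is a homomorphism
`F → ℤ/2` vanishing on `N` (`x ≠ 1` iff `x⁻¹ ≠ 1`), and it takes the value `3 = 1` on
`[x, y, xy]`, so this datum has order exactly `2`. Finally, `w = a x̂ + b ŷ + c (xy)^` maps to
`(a + c, b + c)` under `φ`, so on `ker φ` we have `a ≡ b ≡ c (mod 2)` and
`w - a [x, y, xy] ∈ 2F`.
-/

def ncc (x : G) (hx : x ≠ 1) : NCC G := ⟨ConjClasses.mk x, mt mk_eq_one_iff.mp hx⟩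

lemma exists_ncc_eq (c : NCC G) : ∃ x hx, ncc x hx = c := by
  obtain ⟨x, hx⟩ := ConjClasses.mk_surjective c.1
  exact ⟨x, fun h => c.2 (hx ▸ mk_eq_one_iff.mpr h), Subtype.ext hx⟩

lemma ncc_inj {A : Type*} [CommGroup A] {x y : A} {hx : x ≠ 1} {hy : y ≠ 1} :
    ncc x hx = ncc y hy ↔ x = y :=
  Subtype.ext_iff.trans (ConjClasses.mk_eq_mk_iff_isConj.trans isConj_iff_eq)

lemma clsF_one : clsF G 1 = 0 := by
  rw [clsF, clsC, dif_pos (mk_eq_one_iff.mpr rfl)]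

lemma clsF_of_ne_one {x : G} (hx : x ≠ 1) : clsF G x = FreeAbelianGroup.of (ncc x hx) := by
  rw [clsF, clsC, dif_neg (mt mk_eq_one_iff.mp hx)]
  rfl

noncomputable def sodMk : (phi G).ker →+ SOD G := QuotientAddGroup.mk' _

lemma sodMk_surjective : Function.Surjective (sodMk (G := G)) :=
  QuotientAddGroup.mk'_surjective _

lemma sodMk_eq_zero_iff {w : (phi G).ker} :
    sodMk w = 0 ↔ (w : FreeAbelianGroup (NCC G)) ∈ NSub G :=
  (QuotientAddGroup.eq_zero_iff _).trans AddSubgroup.mem_addSubgroupOf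

lemma data_eq_sodMk (l : List G) (h : l.prod ∈ commutator G) :
    data l h = sodMk ⟨sumF l, sumF_mem_ker h⟩ :=
  rfl

noncomputable def parity (X : Type*) : FreeAbelianGroup X →+ ZMod 2 :=
  FreeAbelianGroup.lift fun _ => 1

lemma parity_of {X : Type*} (c : X) : parity X (FreeAbelianGroup.of c) = 1 :=
  FreeAbelianGroup.lift_apply_of _ _

lemma parity_clsF_of_ne_one {x : G} (hx : x ≠ 1) : parity (NCC G) (clsF G x) = 1 := by
  rw [clsF_of_ne_one hx, parity_of]

lemma NSub_le_ker_parity : NSub G ≤ (parity (NCC G)).ker := by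
  rw [NSub, AddSubgroup.closure_le]
  rintro _ ⟨x, rfl⟩
  by_cases hx : x = 1
  · simp [hx, clsF_one]
  · rw [SetLike.mem_coe, AddMonoidHom.mem_ker, map_add, parity_clsF_of_ne_one hx,
      parity_clsF_of_ne_one (inv_ne_one.mpr hx)]
    rfl

noncomputable def sodParity : SOD G →+ ZMod 2 :=
  QuotientAddGroup.lift _ ((parity (NCC G)).comp (AddSubgroup.subtype _))
    fun _ hw => NSub_le_ker_parity (AddSubgroup.mem_addSubgroupOf.mp hw)

lemma sodParity_data (l : List G) (h : l.prod ∈ commutator G) :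
    sodParity (data l h) = parity (NCC G) (sumF l) :=
  rfl

lemma two_zsmul_mem_NSub (hG : ∀ g : G, g⁻¹ = g) (w : FreeAbelianGroup (NCC G)) :
    (2 : ℤ) • w ∈ NSub G := by
  induction w using FreeAbelianGroup.induction_on with
  | zero => rw [zsmul_zero]; exact (NSub G).zero_mem
  | of c =>
    obtain ⟨x, hx, rfl⟩ := exists_ncc_eq c
    refine AddSubgroup.subset_closure ⟨x, ?_⟩
    rw [hG, ← clsF_of_ne_one hx, two_zsmul]
  | neg c hc => simpa using (NSub G).neg_mem hc
  | add v w hv hw => simpa using (NSub G).add_mem hv hw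

lemma zsmul_mem_NSub_of_even (hG : ∀ g : G, g⁻¹ = g) {k : ℤ} (hk : Even k)
    (w : FreeAbelianGroup (NCC G)) : k • w ∈ NSub G := by
  obtain ⟨m, rfl⟩ := hk
  rw [← two_mul, mul_comm, mul_zsmul]
  exact (NSub G).zsmul_mem (two_zsmul_mem_NSub hG w) m

lemma two_nsmul_data (hG : ∀ g : G, g⁻¹ = g) (l : List G) (h : l.prod ∈ commutator G) :
    2 • data l h = 0 := by
  rw [data_eq_sodMk, ← map_nsmul, sodMk_eq_zero_iff]
  exact_mod_cast two_zsmul_mem_NSub hG (sumF l)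

lemma addOrderOf_data_eq_two (hG : ∀ g : G, g⁻¹ = g) {l : List G} (h : l.prod ∈ commutator G)
    (hl : parity (NCC G) (sumF l) = 1) : addOrderOf (data l h) = 2 := by
  have : Fact (Nat.Prime 2) := ⟨Nat.prime_two⟩
  refine addOrderOf_eq_prime (two_nsmul_data hG l h) fun h0 => ?_
  have := congrArg sodParity h0
  rw [sodParity_data, hl, map_zero] at this
  exact one_ne_zero this

abbrev Klein : Type := Multiplicative (ZMod 2 × ZMod 2)

namespace Klein

open FreeAbelianGroup

def x : Klein := Multiplicative.ofAdd (1, 0)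
def y : Klein := Multiplicative.ofAdd (0, 1)
def z : Klein := Multiplicative.ofAdd (1, 1)

lemma inv_eq_self (g : Klein) : g⁻¹ = g := by revert g; decide

lemma eq_one_or_eq_x_or_eq_y_or_eq_z (g : Klein) : g = 1 ∨ g = x ∨ g = y ∨ g = z := by
  revert g; decide

def cx : NCC Klein := ncc x (by decide)
def cy : NCC Klein := ncc y (by decide)
def cz : NCC Klein := ncc z (by decide)

lemma cx_ne_cy : cx ≠ cy := mt ncc_inj.mp (by decide)
lemma cx_ne_cz : cx ≠ cz := mt ncc_inj.mp (by decide)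
lemma cy_ne_cz : cy ≠ cz := mt ncc_inj.mp (by decide)

lemma ncc_cases (c : NCC Klein) : c = cx ∨ c = cy ∨ c = cz := by
  obtain ⟨g, hg, rfl⟩ := exists_ncc_eq c
  rcases eq_one_or_eq_x_or_eq_y_or_eq_z g with rfl | rfl | rfl | rfl
  exacts [absurd rfl hg, Or.inl rfl, Or.inr (Or.inl rfl), Or.inr (Or.inr rfl)]

lemma eq_coeff_smul (w : FreeAbelianGroup (NCC Klein)) :
    w = coeff cx w • of cx + coeff cy w • of cy + coeff cz w • of cz := by
  suffices AddMonoidHom.id _ = (zmultiplesHom _ (of cx)).comp (coeff cx)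
      + (zmultiplesHom _ (of cy)).comp (coeff cy)
      + (zmultiplesHom _ (of cz)).comp (coeff cz) by
    simpa using DFunLike.congr_fun this w
  refine lift_ext _ _ fun c => ?_
  rcases ncc_cases c with rfl | rfl | rfl <;>
    simp [coeff, cx_ne_cy, cx_ne_cz, cy_ne_cz, cx_ne_cy.symm, cx_ne_cz.symm, cy_ne_cz.symm]

noncomputable def abCoords : Additive (Abelianization Klein) →+ ZMod 2 × ZMod 2 :=
  MonoidHom.toAdditiveLeft (Abelianization.lift (MonoidHom.id Klein))

lemma abCoords_phi_of (g : Klein) (hg : g ≠ 1) :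
    abCoords (phi Klein (of (ncc g hg))) = Multiplicative.toAdd g := by
  rw [phi_of, ncc, classAb_mk, abCoords, MonoidHom.coe_toAdditiveLeft]
  simp

lemma even_coeff_add_of_mem_ker {w : FreeAbelianGroup (NCC Klein)} (hw : w ∈ (phi Klein).ker) :
    Even (coeff cx w + coeff cz w) ∧ Even (coeff cy w + coeff cz w) := by
  have hx : abCoords (phi Klein (of cx)) = (1, 0) := abCoords_phi_of x _
  have hy : abCoords (phi Klein (of cy)) = (0, 1) := abCoords_phi_of y _
  have hz : abCoords (phi Klein (of cz)) = (1, 1) := abCoords_phi_of z _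
  have h := congrArg (abCoords.comp (phi Klein)) (eq_coeff_smul w)
  simp only [AddMonoidHom.comp_apply, AddMonoidHom.mem_ker.mp hw, map_zero, map_add, map_zsmul,
    hx, hy, hz] at h
  have h1 := congrArg Prod.fst h
  have h2 := congrArg Prod.snd h
  simp only [Prod.fst_zero, Prod.snd_zero, Prod.smul_mk, zsmul_eq_mul, mul_one, smul_zero,
    Prod.mk_add_mk, add_zero, zero_add] at h1 h2
  constructor <;> rw [← ZMod.intCast_eq_zero_iff_even] <;> push_cast
  exacts [h1.symm, h2.symm]

lemma sumF_x_y_mul : sumF [x, y, x * y] = of cx + of cy + of cz := by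
  rw [show x * y = z by decide, sumF_cons, sumF_cons, sumF_cons, sumF_nil, add_zero,
    clsF_of_ne_one, clsF_of_ne_one, clsF_of_ne_one, add_assoc]
  rfl

lemma parity_sumF_x_y_mul : parity (NCC Klein) (sumF [x, y, x * y]) = 1 := by
  rw [sumF_x_y_mul, map_add, map_add, parity_of, parity_of, parity_of]
  rfl

lemma closure_data_x_y_mul_eq_top (h : [x, y, x * y].prod ∈ commutator Klein) :
    AddSubgroup.closure {data [x, y, x * y] h} = ⊤ := by
  refine (AddSubgroup.eq_top_iff' _).mpr fun t => ?_
  obtain ⟨w, rfl⟩ := sodMk_surjective t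
  obtain ⟨hxz, hyz⟩ := even_coeff_add_of_mem_ker w.2
  have hyx : Even (coeff cy w - coeff cx w) := by simpa using hyz.sub hxz
  have hzx : Even (coeff cz w - coeff cx w) := by
    simpa [two_mul] using hxz.sub (even_two_mul (coeff cx w))
  have hw : sodMk w = coeff cx w • data [x, y, x * y] h := by
    rw [data_eq_sodMk, ← map_zsmul, ← sub_eq_zero, ← map_sub, sodMk_eq_zero_iff]
    change (w : FreeAbelianGroup (NCC Klein)) - coeff cx w • sumF [x, y, x * y] ∈ NSub Klein
    rw [sumF_x_y_mul]
    nth_rw 1 [eq_coeff_smul w]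
    have hdiff : coeff cx w • of cx + coeff cy w • of cy + coeff cz w • of cz
        - coeff cx w • (of cx + of cy + of cz)
        = (coeff cy w - coeff cx w) • of cy + (coeff cz w - coeff cx w) • of cz := by
      module
    rw [hdiff]
    exact add_mem (zsmul_mem_NSub_of_even inv_eq_self hyx _)
      (zsmul_mem_NSub_of_even inv_eq_self hzx _)
  rw [hw]
  exact zsmul_mem (AddSubgroup.subset_closure (Set.mem_singleton _)) _

end Klein

/-- for the Klein four-group `G = C₂ × C₂` with generators `x`, `y`,
the group `𝔹_G` is cyclic of order 2, generated by `[x, y, xy]`. -/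
theorem stmt7 (x y : Multiplicative (ZMod 2 × ZMod 2))
    (hx : x = Multiplicative.ofAdd ((1, 0) : ZMod 2 × ZMod 2))
    (hy : y = Multiplicative.ofAdd ((0, 1) : ZMod 2 × ZMod 2)) :
    AddSubgroup.closure
        {data [x, y, x * y] (by
          subst hx hy
          have h1 : ([Multiplicative.ofAdd ((1, 0) : ZMod 2 × ZMod 2),
              Multiplicative.ofAdd ((0, 1) : ZMod 2 × ZMod 2),
              Multiplicative.ofAdd ((1, 0) : ZMod 2 × ZMod 2) *
                Multiplicative.ofAdd ((0, 1) : ZMod 2 × ZMod 2)] :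
              List (Multiplicative (ZMod 2 × ZMod 2))).prod = 1 := by decide
          rw [h1]; exact Subgroup.one_mem _)} = ⊤ ∧
    addOrderOf (data [x, y, x * y] (by
          subst hx hy
          have h1 : ([Multiplicative.ofAdd ((1, 0) : ZMod 2 × ZMod 2),
              Multiplicative.ofAdd ((0, 1) : ZMod 2 × ZMod 2),
              Multiplicative.ofAdd ((1, 0) : ZMod 2 × ZMod 2) *
                Multiplicative.ofAdd ((0, 1) : ZMod 2 × ZMod 2)] :
              List (Multiplicative (ZMod 2 × ZMod 2))).prod = 1 := by decide
          rw [h1]; exact Subgroup.one_mem _)) = 2 := by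
  subst hx hy
  exact ⟨Klein.closure_data_x_y_mul_eq_top _,
    addOrderOf_data_eq_two Klein.inv_eq_self _ Klein.parity_sumF_x_y_mul⟩

end SingOrbit
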